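/- (Theorem 1, noiseless recovery.) Fix positive integers m₁, m₂, s₁, s₂. Let L, I₀, K₀ be finitely supported functions ℤ×ℤ → ℝ with I₀ ≠ 0, K₀ in the simplex S and supported in the m₁×m₂ grid, and set B = I₀⊗K₀. Let (κ_i)_{i=1,…,s₁s₂} be an orthonormal basis of the space of functions supported in the s₁×s₂ grid, set σ_i = ‖(L⊗B)⊗κ_i‖_F, assume σ_i > 0 for all i, and let σ_max = max_i σ_i. Suppose τ > 0 satisfies ‖(L⊗I₀)⊗X‖_F ≥ τ·‖X‖_F for every X supported in the (m₁+s₁−1)×(m₂+s₂−1) grid. Define h(K) = ∑_{i=1}^{s₁s₂} ‖K⊗κ_i‖_F²/σ_i², and let K̂ be any function in the simplex S supported in the m₁×m₂ grid satisfying h(K̂) ≤ h(K) for every K in S supported in the m₁×m₂ grid. Then ‖K₀ − K̂‖_F ≤ √2 · σ_max / τ. -/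

import Mathlib

/-- Images, kernels, and filters: finitely supported functions `ℤ × ℤ → ℝ`. -/
abbrev Img := (ℤ × ℤ) →₀ ℝ

/-- Discrete 2D convolution: `(X ⊗ Y)(i,j) = ∑_{(u,v)} X((i,j)-(u,v)) * Y(u,v)`. -/
noncomputable def conv (X Y : Img) : Img :=
  X.sum fun a xa => Y.sum fun b yb => Finsupp.single (a + b) (xa * yb)

/-- Frobenius norm `‖X‖_F = √(∑ X(i,j)²)`. -/
noncomputable def frob (X : Img) : ℝ := Real.sqrt (X.sum fun _ c => c ^ 2)

/-- Inner product `⟨X, Y⟩ = ∑ X(i,j) * Y(i,j)`. -/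
noncomputable def inner2 (X Y : Img) : ℝ := X.sum fun p c => c * Y p

/-- ℓ¹ norm `‖X‖₁ = ∑ |X(i,j)|`. -/
noncomputable def l1 (X : Img) : ℝ := X.sum fun _ c => |c|

/-- The simplex `S` of blur kernels: nonnegative entries summing to one. -/
def InSimplex (K : Img) : Prop := (∀ p, 0 ≤ K p) ∧ (K.sum fun _ c => c) = 1

/-- `X` is supported in the `a × b` grid `{0,…,a-1} × {0,…,b-1}`. -/
def SuppIn (a b : ℕ) (X : Img) : Prop :=
  ∀ p : ℤ × ℤ, ¬(0 ≤ p.1 ∧ p.1 < (a : ℤ) ∧ 0 ≤ p.2 ∧ p.2 < (b : ℤ)) → X p = 0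

/-!
Writing `h` for the regularizer and `n = s₁ s₂`: applying the sharpness bound to `K₀ ⊗ κᵢ`
gives `τ ‖K₀ ⊗ κᵢ‖ ≤ ‖(L ⊗ B) ⊗ κᵢ‖ = σᵢ`, so `h(K₀) ≤ n / τ²`. Since `h` is a nonnegative
quadratic form and `K̂` does at least as well as the feasible midpoint of `K₀` and `K̂`, the
parallelogram law gives `h(K₀ - K̂) ≤ 2 h(K₀)`. Finally, `n` orthonormal functions on a grid of
`n` points form an orthogonal matrix, whose columns are then orthonormal as well; hence
`∑ᵢ ‖D ⊗ κᵢ‖² = n ‖D‖²` for every `D`, and `σᵢ ≤ σ_max` yields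
`n ‖K₀ - K̂‖² ≤ σ_max² h(K₀ - K̂) ≤ 2 n σ_max² / τ²`.
-/

open Finset Pointwise

lemma conv_eq_coeff_mul (X Y : Img) :
    conv X Y = (AddMonoidAlgebra.ofCoeff X * AddMonoidAlgebra.ofCoeff Y).coeff := by
  simp only [AddMonoidAlgebra.mul_def, conv,
    AddMonoidAlgebra.coeff_finsuppSum, AddMonoidAlgebra.coeff_single]

lemma conv_assoc (X Y Z : Img) : conv (conv X Y) Z = conv X (conv Y Z) := by
  simp only [conv_eq_coeff_mul, AddMonoidAlgebra.ofCoeff_coeff, mul_assoc]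

lemma conv_add_left (X Y Z : Img) : conv (X + Y) Z = conv X Z + conv Y Z := by
  simp only [conv_eq_coeff_mul, AddMonoidAlgebra.ofCoeff_add, add_mul,
    AddMonoidAlgebra.coeff_add]

lemma conv_sub_left (X Y Z : Img) : conv (X - Y) Z = conv X Z - conv Y Z := by
  simp only [conv_eq_coeff_mul, AddMonoidAlgebra.ofCoeff_sub, sub_mul,
    AddMonoidAlgebra.coeff_sub]

lemma conv_smul_left (c : ℝ) (X Z : Img) : conv (c • X) Z = c • conv X Z := by
  simp only [conv_eq_coeff_mul, AddMonoidAlgebra.ofCoeff_smul, smul_mul_assoc,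
    AddMonoidAlgebra.coeff_smul]

lemma support_conv_subset (X Y : Img) : (conv X Y).support ⊆ X.support + Y.support := by
  rw [conv_eq_coeff_mul]
  exact AddMonoidAlgebra.support_coeff_mul_subset _ _

lemma conv_apply_eq_sum (X Y : Img) {t : Finset (ℤ × ℤ)} (h : Y.support ⊆ t) (p : ℤ × ℤ) :
    conv X Y p = ∑ q ∈ t, X (p - q) * Y q := by
  rw [conv_eq_coeff_mul, AddMonoidAlgebra.coeff_mul_apply_right]
  exact Finsupp.sum_of_support_subset _ h _ fun q _ => mul_zero _

lemma frob_nonneg (X : Img) : 0 ≤ frob X := Real.sqrt_nonneg _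

lemma frob_sq_eq_sum {X : Img} {t : Finset (ℤ × ℤ)} (h : X.support ⊆ t) :
    frob X ^ 2 = ∑ p ∈ t, X p ^ 2 := by
  rw [frob, Finsupp.sum_of_support_subset X h (fun _ c => c ^ 2) fun _ _ => zero_pow two_ne_zero,
    Real.sq_sqrt (sum_nonneg fun _ _ => sq_nonneg _)]

lemma inner2_eq_sum {X : Img} {t : Finset (ℤ × ℤ)} (h : X.support ⊆ t) (Y : Img) :
    inner2 X Y = ∑ p ∈ t, X p * Y p :=
  Finsupp.sum_of_support_subset _ h _ fun _ _ => zero_mul _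

lemma frob_smul_sq (c : ℝ) (X : Img) : frob (c • X) ^ 2 = c ^ 2 * frob X ^ 2 := by
  rw [frob_sq_eq_sum Finsupp.support_smul, frob_sq_eq_sum subset_rfl, Finset.mul_sum]
  simp only [Finsupp.smul_apply, smul_eq_mul, mul_pow]

lemma frob_add_sq_add_frob_sub_sq (X Y : Img) :
    frob (X + Y) ^ 2 + frob (X - Y) ^ 2 = 2 * frob X ^ 2 + 2 * frob Y ^ 2 := by
  rw [frob_sq_eq_sum (Finsupp.support_add (g₁ := X) (g₂ := Y)),
    frob_sq_eq_sum Finsupp.support_sub, frob_sq_eq_sum subset_union_left,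
    frob_sq_eq_sum subset_union_right, ← sum_add_distrib, mul_sum, mul_sum, ← sum_add_distrib]
  refine sum_congr rfl fun p _ => ?_
  simp only [Finsupp.add_apply, Finsupp.sub_apply]
  ring

noncomputable def grid (a b : ℕ) : Finset (ℤ × ℤ) := Ico 0 (a : ℤ) ×ˢ Ico 0 (b : ℤ)

lemma card_grid (a b : ℕ) : (grid a b).card = a * b := by
  simp [grid, card_product]

lemma suppIn_iff_support_subset {a b : ℕ} {X : Img} : SuppIn a b X ↔ X.support ⊆ grid a b := by
  simp only [SuppIn, grid, subset_iff, Finsupp.mem_support_iff, mem_product, mem_Ico]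
  constructor
  · intro h p hp
    by_contra hn
    exact hp (h p (by tauto))
  · intro h p hp
    by_contra hn
    exact hp (by have := h hn; tauto)

lemma grid_add_grid_subset (a b c d : ℕ) :
    grid a b + grid c d ⊆ grid (a + c - 1) (b + d - 1) := by
  intro p hp
  obtain ⟨x, hx, y, hy, rfl⟩ := mem_add.1 hp
  simp only [grid, mem_product, mem_Ico] at hx hy ⊢
  simp only [Prod.fst_add, Prod.snd_add]
  omega

lemma SuppIn.conv {a b c d : ℕ} {X Y : Img} (hX : SuppIn a b X) (hY : SuppIn c d Y) :
    SuppIn (a + c - 1) (b + d - 1) (conv X Y) := by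
  rw [suppIn_iff_support_subset] at *
  exact (support_conv_subset X Y).trans
    ((add_subset_add hX hY).trans (grid_add_grid_subset a b c d))

lemma sum_mul_eq_ite_of_orthonormal {ι : Type*} [Fintype ι] [DecidableEq ι]
    {G : Finset (ℤ × ℤ)} (hcard : Fintype.card ι = G.card) {κ : ι → Img}
    (hsupp : ∀ i, (κ i).support ⊆ G)
    (hortho : ∀ i j, inner2 (κ i) (κ j) = if i = j then 1 else 0)
    {q q' : ℤ × ℤ} (hq : q ∈ G) (hq' : q' ∈ G) :
    ∑ i, κ i q * κ i q' = if q = q' then 1 else 0 := by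
  let U : Matrix ι G ℝ := Matrix.of fun i q => κ i q
  have hU : U * U.transpose = 1 := by
    ext i j
    simp only [U, Matrix.mul_apply, Matrix.transpose_apply, Matrix.of_apply, Matrix.one_apply,
      ← hortho, inner2_eq_sum (hsupp i), sum_coe_sort G (fun q => κ i q * κ j q)]
  have hUT := (Matrix.mul_eq_one_comm_of_card_eq ι G ℝ (by simpa using hcard)).1 hU
  have := congrFun (congrFun hUT ⟨q, hq⟩) ⟨q', hq'⟩
  simpa [U, Matrix.mul_apply, Matrix.one_apply] using this

lemma sum_sq_sum_mul_eq_of_sum_mul_eq_ite {α ι : Type*} [DecidableEq α] [Fintype ι]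
    {G : Finset α} {v : ι → α → ℝ}
    (hcol : ∀ q ∈ G, ∀ q' ∈ G, ∑ i, v i q * v i q' = if q = q' then 1 else 0) (a : α → ℝ) :
    ∑ i, (∑ q ∈ G, a q * v i q) ^ 2 = ∑ q ∈ G, a q ^ 2 := by
  calc ∑ i, (∑ q ∈ G, a q * v i q) ^ 2
      = ∑ q ∈ G, ∑ q' ∈ G, a q * a q' * ∑ i, v i q * v i q' := by
        simp_rw [sq, sum_mul_sum]
        rw [sum_comm]
        refine sum_congr rfl fun q _ => ?_
        rw [sum_comm]
        refine sum_congr rfl fun q' _ => ?_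
        rw [mul_sum]
        exact sum_congr rfl fun i _ => by ring
    _ = ∑ q ∈ G, a q ^ 2 := sum_congr rfl fun q hq => by
        rw [sum_congr rfl fun q' hq' => by rw [hcol q hq q' hq']]
        simp [hq, sq]

lemma sum_sq_sub_eq_frob_sq {D : Img} {P : Finset (ℤ × ℤ)} {q : ℤ × ℤ}
    (h : ∀ r ∈ D.support, r + q ∈ P) : ∑ p ∈ P, D (p - q) ^ 2 = frob D ^ 2 := by
  rw [frob_sq_eq_sum subset_rfl]
  symm
  calc ∑ r ∈ D.support, D r ^ 2 = ∑ p ∈ D.support.map (addRightEmbedding q), D (p - q) ^ 2 := by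
        simp [sum_map]
    _ = ∑ p ∈ P, D (p - q) ^ 2 := by
        refine sum_subset ?_ fun p _ hp => ?_
        · intro p
          simp only [mem_map, addRightEmbedding_apply]
          rintro ⟨r, hr, rfl⟩
          exact h r hr
        · simp only [mem_map, addRightEmbedding_apply, not_exists, not_and] at hp
          have : D (p - q) = 0 := by
            by_contra hne
            exact hp (p - q) (Finsupp.mem_support_iff.2 hne) (sub_add_cancel p q)
          simp [this]

lemma sum_frob_conv_sq_eq_card_mul {ι : Type*} [Fintype ι] {G : Finset (ℤ × ℤ)} {κ : ι → Img}
    (hsupp : ∀ i, (κ i).support ⊆ G)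
    (hcol : ∀ q ∈ G, ∀ q' ∈ G, ∑ i, κ i q * κ i q' = if q = q' then 1 else 0) (D : Img) :
    ∑ i, frob (conv D (κ i)) ^ 2 = G.card * frob D ^ 2 := by
  set P := D.support + G
  have hP : ∀ i, (conv D (κ i)).support ⊆ P := fun i =>
    (support_conv_subset _ _).trans (add_subset_add_left (hsupp i))
  calc ∑ i, frob (conv D (κ i)) ^ 2 = ∑ i, ∑ p ∈ P, (∑ q ∈ G, D (p - q) * κ i q) ^ 2 := by
        simp only [frob_sq_eq_sum (hP _), conv_apply_eq_sum D _ (hsupp _)]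
    _ = ∑ p ∈ P, ∑ q ∈ G, D (p - q) ^ 2 := by
        rw [sum_comm]
        exact sum_congr rfl fun p _ => sum_sq_sum_mul_eq_of_sum_mul_eq_ite hcol _
    _ = ∑ q ∈ G, ∑ p ∈ P, D (p - q) ^ 2 := sum_comm
    _ = G.card * frob D ^ 2 := by
        rw [sum_congr rfl fun q hq => sum_sq_sub_eq_frob_sq fun r hr => add_mem_add hr hq,
          sum_const, nsmul_eq_mul]

lemma convex_setOf_inSimplex : Convex ℝ {K : Img | InSimplex K} := by
  intro x hx y hy a b ha hb hab
  refine ⟨fun p => ?_, ?_⟩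
  · have := hx.1 p
    have := hy.1 p
    simp only [Finsupp.add_apply, Finsupp.smul_apply, smul_eq_mul]
    positivity
  · rw [Finsupp.sum_add_index' (fun _ => rfl) (fun _ _ _ => rfl),
      Finsupp.sum_smul_index fun _ => rfl, Finsupp.sum_smul_index fun _ => rfl,
      ← Finsupp.mul_sum, ← Finsupp.mul_sum, hx.2, hy.2, mul_one, mul_one, hab]

lemma convex_setOf_suppIn (a b : ℕ) : Convex ℝ {X : Img | SuppIn a b X} := by
  intro x hx y hy c d _ _ _ p hp
  simp [hx p hp, hy p hp]

section Regularizer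

variable {ι : Type*} [Fintype ι] (κ : ι → Img) (σ : ι → ℝ)

noncomputable def regularizer (K : Img) : ℝ := ∑ i, frob (conv K (κ i)) ^ 2 / σ i ^ 2

variable {κ σ}

lemma regularizer_nonneg (K : Img) : 0 ≤ regularizer κ σ K :=
  sum_nonneg fun _ _ => by positivity

lemma regularizer_smul (c : ℝ) (K : Img) :
    regularizer κ σ (c • K) = c ^ 2 * regularizer κ σ K := by
  simp only [regularizer, conv_smul_left, frob_smul_sq, mul_sum, mul_div_assoc]

lemma regularizer_add_add_regularizer_sub (K K' : Img) :
    regularizer κ σ (K + K') + regularizer κ σ (K - K') =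
      2 * regularizer κ σ K + 2 * regularizer κ σ K' := by
  simp only [regularizer, mul_sum, ← sum_add_distrib]
  refine sum_congr rfl fun i _ => ?_
  rw [conv_add_left, conv_sub_left, ← add_div, frob_add_sq_add_frob_sub_sq]
  ring

lemma regularizer_sub_le_of_le_midpoint {K K' : Img}
    (h : regularizer κ σ K' ≤ regularizer κ σ ((1 / 2 : ℝ) • K + (1 / 2 : ℝ) • K')) :
    regularizer κ σ (K - K') ≤ 2 * regularizer κ σ K := by
  rw [← smul_add, regularizer_smul] at h
  linarith [regularizer_add_add_regularizer_sub (κ := κ) (σ := σ) K K',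
    regularizer_nonneg (κ := κ) (σ := σ) K']

lemma regularizer_le_of_forall_mul_frob_le (hσ : ∀ i, 0 < σ i) {τ : ℝ} (hτ : 0 < τ) {K : Img}
    (h : ∀ i, τ * frob (conv K (κ i)) ≤ σ i) :
    regularizer κ σ K ≤ Fintype.card ι / τ ^ 2 :=
  calc regularizer κ σ K ≤ ∑ _i : ι, 1 / τ ^ 2 := sum_le_sum fun i _ => by
        rw [div_le_div_iff₀ (pow_pos (hσ i) 2) (pow_pos hτ 2), one_mul, mul_comm, ← mul_pow]
        exact pow_le_pow_left₀ (mul_nonneg hτ.le (frob_nonneg _)) (h i) 2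
    _ = Fintype.card ι / τ ^ 2 := by simp [div_eq_mul_inv]

lemma sum_frob_conv_sq_le (hσ : ∀ i, 0 < σ i) {M : ℝ} (hM : ∀ i, σ i ≤ M) (X : Img) :
    ∑ i, frob (conv X (κ i)) ^ 2 ≤ M ^ 2 * regularizer κ σ X := by
  rw [regularizer, mul_sum]
  refine sum_le_sum fun i _ => ?_
  rw [mul_div_assoc', le_div_iff₀ (pow_pos (hσ i) 2), mul_comm]
  exact mul_le_mul_of_nonneg_right (pow_le_pow_left₀ (hσ i).le (hM i) 2) (sq_nonneg _)

end Regularizer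

theorem recovery_noiseless_general (m₁ m₂ s₁ s₂ : ℕ)
    (L I₀ K₀ B : Img)
    (hK₀ : InSimplex K₀) (hK₀supp : SuppIn m₁ m₂ K₀)
    (hB : B = conv I₀ K₀)
    (κ : Fin (s₁ * s₂) → Img) (hκsupp : ∀ i, SuppIn s₁ s₂ (κ i))
    (hortho : ∀ i j, inner2 (κ i) (κ j) = if i = j then 1 else 0)
    (σ : Fin (s₁ * s₂) → ℝ) (hσ : ∀ i, σ i = frob (conv (conv L B) (κ i)))
    (hσpos : ∀ i, 0 < σ i)
    (σmax : ℝ) (hσmax : IsGreatest (Set.range σ) σmax)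
    (τ : ℝ) (hτ : 0 < τ)
    (hsharp : ∀ X : Img, SuppIn (m₁ + s₁ - 1) (m₂ + s₂ - 1) X →
      τ * frob X ≤ frob (conv (conv L I₀) X))
    (Khat : Img) (hKhat : InSimplex Khat) (hKhatsupp : SuppIn m₁ m₂ Khat)
    (hmin : ∀ K : Img, InSimplex K → SuppIn m₁ m₂ K →
      ∑ i, frob (conv Khat (κ i)) ^ 2 / (σ i) ^ 2 ≤
        ∑ i, frob (conv K (κ i)) ^ 2 / (σ i) ^ 2) :
    frob (K₀ - Khat) ≤ Real.sqrt 2 * σmax / τ := by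
  obtain ⟨i₀, -⟩ := hσmax.1
  have hσle : ∀ i, σ i ≤ σmax := fun i => hσmax.2 ⟨i, rfl⟩
  have hn : (0 : ℝ) < s₁ * s₂ := by exact_mod_cast i₀.pos
  have hκG : ∀ i, (κ i).support ⊆ grid s₁ s₂ := fun i => suppIn_iff_support_subset.1 (hκsupp i)
  have hregK₀ : regularizer κ σ K₀ ≤ (s₁ * s₂ : ℝ) / τ ^ 2 := by
    simpa using regularizer_le_of_forall_mul_frob_le hσpos hτ fun i => by
      simpa only [conv_assoc, hB, hσ] using hsharp _ (hK₀supp.conv (hκsupp i))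
  have hD : regularizer κ σ (K₀ - Khat) ≤ 2 * regularizer κ σ K₀ :=
    regularizer_sub_le_of_le_midpoint <| hmin _
      (convex_setOf_inSimplex hK₀ hKhat (by norm_num) (by norm_num) (by norm_num))
      (convex_setOf_suppIn m₁ m₂ hK₀supp hKhatsupp (by norm_num) (by norm_num) (by norm_num))
  have hparseval := sum_frob_conv_sq_eq_card_mul hκG
    (fun q hq q' hq' => sum_mul_eq_ite_of_orthonormal (by simp [card_grid]) hκG hortho hq hq')
    (K₀ - Khat)
  rw [card_grid, Nat.cast_mul] at hparseval
  have key : (s₁ * s₂ : ℝ) * frob (K₀ - Khat) ^ 2 ≤ (s₁ * s₂) * (Real.sqrt 2 * σmax / τ) ^ 2 :=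
    calc (s₁ * s₂ : ℝ) * frob (K₀ - Khat) ^ 2 = ∑ i, frob (conv (K₀ - Khat) (κ i)) ^ 2 :=
          hparseval.symm
      _ ≤ σmax ^ 2 * (2 * ((s₁ * s₂ : ℝ) / τ ^ 2)) :=
          (sum_frob_conv_sq_le hσpos hσle _).trans (by gcongr; linarith [hD, hregK₀])
      _ = (s₁ * s₂) * (Real.sqrt 2 * σmax / τ) ^ 2 := by
          rw [div_pow, mul_pow, Real.sq_sqrt zero_le_two]
          ring
  have hσmax_nonneg : 0 ≤ σmax := (hσpos i₀).le.trans (hσle i₀)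
  exact (pow_le_pow_iff_left₀ (frob_nonneg _) (by positivity) two_ne_zero).1
    (le_of_mul_le_mul_left key hn)

/-- Theorem 1 (noiseless recovery): any minimizer `K̂` of the regularizer over the simplex
satisfies `‖K₀ - K̂‖_F ≤ √2 σ_max / τ`. -/
theorem recovery_noiseless (m₁ m₂ s₁ s₂ : ℕ)
    (hm₁ : 0 < m₁) (hm₂ : 0 < m₂) (hs₁ : 0 < s₁) (hs₂ : 0 < s₂)
    (L I₀ K₀ B : Img) (hI₀ : I₀ ≠ 0)
    (hK₀ : InSimplex K₀) (hK₀supp : SuppIn m₁ m₂ K₀)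
    (hB : B = conv I₀ K₀)
    (κ : Fin (s₁ * s₂) → Img) (hκsupp : ∀ i, SuppIn s₁ s₂ (κ i))
    (hortho : ∀ i j, inner2 (κ i) (κ j) = if i = j then 1 else 0)
    (σ : Fin (s₁ * s₂) → ℝ) (hσ : ∀ i, σ i = frob (conv (conv L B) (κ i)))
    (hσpos : ∀ i, 0 < σ i)
    (σmax : ℝ) (hσmax : IsGreatest (Set.range σ) σmax)
    (τ : ℝ) (hτ : 0 < τ)
    (hsharp : ∀ X : Img, SuppIn (m₁ + s₁ - 1) (m₂ + s₂ - 1) X →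
      τ * frob X ≤ frob (conv (conv L I₀) X))
    (Khat : Img) (hKhat : InSimplex Khat) (hKhatsupp : SuppIn m₁ m₂ Khat)
    (hmin : ∀ K : Img, InSimplex K → SuppIn m₁ m₂ K →
      ∑ i, frob (conv Khat (κ i)) ^ 2 / (σ i) ^ 2 ≤
        ∑ i, frob (conv K (κ i)) ^ 2 / (σ i) ^ 2) :
    frob (K₀ - Khat) ≤ Real.sqrt 2 * σmax / τ :=
  recovery_noiseless_general m₁ m₂ s₁ s₂ L I₀ K₀ B hK₀ hK₀supp hB κ hκsupp hortho σ hσ hσpos σmax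
    hσmax τ hτ hsharp Khat hKhat hKhatsupp hmin
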